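/- arXiv:2602.16419 — 6 statements merged into one kernel-verified Lean document; each statement's English description precedes it below -/
import Mathlib

section
/- Let T : X → Y be an order bounded linear operator between pre-ordered vector spaces X and Y, and suppose the positive wedge Y₊ is majorizing in Y (i.e. Y₊ − Y₊ = Y). Then T is τ_ru-continuous; equivalently, for every ru-closed subset S ⊆ Y, the preimage T⁻¹(S) is ru-closed in X. -/
/-- A wedge in a real vector space: closed under addition and nonnegative scaling. -/
def IsWedge {V : Type*} [AddCommGroup V] [Module ℝ V] (W : Set V) : Prop :=
  (∀ x ∈ W, ∀ y ∈ W, x + y ∈ W) ∧ ∀ t : ℝ, 0 ≤ t → ∀ x ∈ W, t • x ∈ W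

/-- Relative uniform convergence of the sequence `x` to `l`, with respect to the
positive wedge `P`: for some regulator `w ∈ P`, for every `m ≥ 1` eventually
`±(x k − l) ≤ (1/m)·w` (inequalities expressed via membership in `P`). -/
def RuConv {V : Type*} [AddCommGroup V] [Module ℝ V] (P : Set V) (x : ℕ → V) (l : V) : Prop :=
  ∃ w ∈ P, ∀ m : ℕ, 1 ≤ m → ∃ N : ℕ, ∀ k ≥ N,
    (1 / (m : ℝ)) • w - (x k - l) ∈ P ∧ (1 / (m : ℝ)) • w + (x k - l) ∈ P

/-- A set `S` is ru-closed if it contains the limits of all ru-convergent sequences in `S`. -/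
def RuClosed {V : Type*} [AddCommGroup V] [Module ℝ V] (P : Set V) (S : Set V) : Prop :=
  ∀ (x : ℕ → V) (l : V), (∀ n, x n ∈ S) → RuConv P x l → l ∈ S

/-- `S′_ru`: the set of limits of ru-convergent sequences in `S`. -/
def ruDeriv {V : Type*} [AddCommGroup V] [Module ℝ V] (P : Set V) (S : Set V) : Set V :=
  {l | ∃ x : ℕ → V, (∀ n, x n ∈ S) ∧ RuConv P x l}

/-- The τ_ru-closure of `S`: the smallest ru-closed set containing `S`. -/
def ruClosure {V : Type*} [AddCommGroup V] [Module ℝ V] (P : Set V) (S : Set V) : Set V :=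
  ⋂₀ {C : Set V | S ⊆ C ∧ RuClosed P C}

/-- Let `T : X → Y` be an order bounded linear operator between
pre-ordered vector spaces (for all `a ≤ b` in `X` there are `c ≤ d` in `Y` with
`T([a,b]) ⊆ [c,d]`), and suppose the positive wedge `Q` of `Y` is majorizing
(`Q − Q = Y`).  Then `T` is τ_ru-continuous: the preimage of every ru-closed
subset of `Y` is ru-closed in `X`. -/
theorem orderBounded_operator_ruContinuous {X Y : Type*}
    [AddCommGroup X] [Module ℝ X] [AddCommGroup Y] [Module ℝ Y]
    (P : Set X) (hP : IsWedge P) (Q : Set Y) (hQ : IsWedge Q)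
    (hmaj : ∀ y : Y, ∃ a ∈ Q, ∃ b ∈ Q, y = a - b)
    (T : X →ₗ[ℝ] Y)
    (hT : ∀ a b : X, b - a ∈ P → ∃ c d : Y, d - c ∈ Q ∧
      ∀ x : X, x - a ∈ P → b - x ∈ P → (T x - c ∈ Q ∧ d - T x ∈ Q)) :
    ∀ S : Set Y, RuClosed Q S → RuClosed P (T ⁻¹' S) := by
  intro S hS x l hx hconv
  obtain ⟨w, hw, hconv⟩ := hconv
  obtain ⟨c, d, _, hcd⟩ := hT (-w) w (by
    have : w + w ∈ P := hP.1 w hw w hw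
    simpa [sub_neg_eq_add] using this)
  obtain ⟨a, ha, b, hb, hd⟩ := hmaj d
  obtain ⟨a', ha', b', hb', hc⟩ := hmaj (-c)
  refine hS (fun n => T (x n)) (T l) hx ⟨a + a', hQ.1 a ha a' ha', ?_⟩
  intro m hm
  obtain ⟨N, hN⟩ := hconv m hm
  refine ⟨N, fun k hk => ?_⟩
  obtain ⟨h1, h2⟩ := hN k hk
  have hmpos : (0:ℝ) < (m : ℝ) := by exact_mod_cast hm
  have hmne : (m:ℝ) ≠ 0 := ne_of_gt hmpos
  have hinv : (0:ℝ) ≤ 1 / (m:ℝ) := by positivity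
  set z : X := (m : ℝ) • (x k - l) with hz
  have hmw : (m : ℝ) • ((1 / (m:ℝ)) • w) = w := by
    rw [smul_smul, mul_one_div_cancel hmne, one_smul]
  have hz1 : w - z ∈ P := by
    have := hP.2 (m:ℝ) (le_of_lt hmpos) _ h1
    rwa [smul_sub, hmw] at this
  have hz2 : w + z ∈ P := by
    have := hP.2 (m:ℝ) (le_of_lt hmpos) _ h2
    rwa [smul_add, hmw] at this
  obtain ⟨hzc, hzd⟩ := hcd z (by simpa [sub_neg_eq_add, add_comm] using hz2) hz1
  have hTz : T z = (m:ℝ) • (T (x k) - T l) := by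
    rw [hz, map_smul, map_sub]
  have hback : (1/(m:ℝ)) • T z = T (x k) - T l := by
    rw [hTz, smul_smul, one_div_mul_cancel hmne, one_smul]
  -- two auxiliary Q-members
  have hvd : a + a' - d ∈ Q := by
    have : a' + b ∈ Q := hQ.1 a' ha' b hb
    have he : a + a' - d = a' + b := by rw [hd]; abel
    rwa [he]
  have hvc : a + a' + c ∈ Q := by
    have : a + b' ∈ Q := hQ.1 a ha b' hb'
    have he : a + a' + c = a + b' := by
      have : c = b' - a' := by
        have := hc; rw [neg_eq_iff_eq_neg] at this; rw [this]; abel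
      rw [this]; abel
    rwa [he]
  constructor
  · have q1 : (1/(m:ℝ)) • (a + a' - d) ∈ Q := hQ.2 _ hinv _ hvd
    have q2 : (1/(m:ℝ)) • (d - T z) ∈ Q := hQ.2 _ hinv _ hzd
    have := hQ.1 _ q1 _ q2
    have he : (1/(m:ℝ)) • (a + a' - d) + (1/(m:ℝ)) • (d - T z)
        = (1/(m:ℝ)) • (a + a') - (T (x k) - T l) := by
      rw [← hback]; module
    rwa [he] at this
  · have q1 : (1/(m:ℝ)) • (a + a' + c) ∈ Q := hQ.2 _ hinv _ hvc
    have q2 : (1/(m:ℝ)) • (T z - c) ∈ Q := hQ.2 _ hinv _ hzc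
    have := hQ.1 _ q1 _ q2
    have he : (1/(m:ℝ)) • (a + a' + c) + (1/(m:ℝ)) • (T z - c)
        = (1/(m:ℝ)) • (a + a') + (T (x k) - T l) := by
      rw [← hback]; module
    rwa [he] at this
end

section
/- A pre-ordered vector space X is Archimedean if and only if there exists a topology τ on X such that every ru-convergent sequence in X τ-converges to the same limit (xₙ →ru x implies xₙ →τ x) and the positive wedge X₊ is τ-closed. -/
/-- A "subsequence" along indices `g k ≥ k` of an ru-convergent sequence ru-converges. -/
lemma ruConv_comp {V : Type*} [AddCommGroup V] [Module ℝ V] (P : Set V) {x : ℕ → V} {l : V}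
    (g : ℕ → ℕ) (hg : ∀ k, k ≤ g k) (h : RuConv P x l) : RuConv P (fun k => x (g k)) l := by
  obtain ⟨w, hw, hconv⟩ := h
  refine ⟨w, hw, fun m hm => ?_⟩
  obtain ⟨N, hN⟩ := hconv m hm
  exact ⟨N, fun k hk => hN (g k) (le_trans hk (hg k))⟩

/-- The union of two ru-closed sets is ru-closed. -/
lemma ruClosed_union {V : Type*} [AddCommGroup V] [Module ℝ V] (P : Set V) {A B : Set V}
    (hA : RuClosed P A) (hB : RuClosed P B) : RuClosed P (A ∪ B) := by
  intro x l hx hconv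
  by_cases h : ∀ N : ℕ, ∃ k, N ≤ k ∧ x k ∈ A
  · choose g hg1 hg2 using h
    exact Or.inl (hA (fun k => x (g k)) l hg2 (ruConv_comp P g hg1 hconv))
  · push_neg at h
    obtain ⟨N, hN⟩ := h
    refine Or.inr (hB (fun k => x (N + k)) l (fun k => ?_) ?_)
    · rcases hx (N + k) with h' | h'
      · exact absurd h' (hN (N + k) (Nat.le_add_right N k))
      · exact h'
    · exact ruConv_comp P (fun k => N + k) (fun k => Nat.le_add_left k N) hconv

/-- A pre-ordered vector space `X` (with positive wedge `P`) is
Archimedean if and only if there is a topology `τ` on `X` such that every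
ru-convergent sequence `τ`-converges to the same limit and `P` is `τ`-closed. -/
theorem archimedean_iff_exists_topology {X : Type*} [AddCommGroup X] [Module ℝ X]
    (P : Set X) (hP : IsWedge P) :
    (∀ x u : X, u ∈ P → (∀ n : ℕ, u - n • x ∈ P) → -x ∈ P) ↔
      ∃ τ : TopologicalSpace X,
        (∀ (x : ℕ → X) (l : X), RuConv P x l → Filter.Tendsto x Filter.atTop (@nhds X τ l)) ∧
        @IsClosed X τ P := by
  constructor
  · intro hArch
    -- P is ru-closed, thanks to Archimedeanness
    have hPclosed : RuClosed P P := by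
      intro x l hx hconv
      obtain ⟨w, hw, hc⟩ := hconv
      have key : ∀ n : ℕ, w - n • (-l) ∈ P := by
        intro n
        rcases Nat.eq_zero_or_pos n with rfl | hn
        · simpa using hw
        · obtain ⟨N, hN⟩ := hc n hn
          have h1 : (1 / (n : ℝ)) • w - (x N - l) ∈ P := (hN N le_rfl).1
          have h2 : ((1 / (n : ℝ)) • w - (x N - l)) + x N ∈ P := hP.1 _ h1 _ (hx N)
          have h3 : (1 / (n : ℝ)) • w + l ∈ P := by
            have he : ((1 / (n : ℝ)) • w - (x N - l)) + x N = (1 / (n : ℝ)) • w + l := by abel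
            rwa [he] at h2
          have h4 : (n : ℝ) • ((1 / (n : ℝ)) • w + l) ∈ P :=
            hP.2 _ (Nat.cast_nonneg n) _ h3
          have hne : (n : ℝ) ≠ 0 := Nat.cast_ne_zero.mpr hn.ne'
          have h5 : (n : ℝ) • ((1 / (n : ℝ)) • w + l) = w + (n : ℝ) • l := by
            rw [smul_add, smul_smul, mul_one_div, div_self hne, one_smul]
          rw [h5] at h4
          have he2 : w - n • (-l) = w + (n : ℝ) • l := by
            rw [← Nat.cast_smul_eq_nsmul ℝ n (-l), smul_neg, sub_neg_eq_add]
          rwa [he2]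
      have := hArch (-l) w hw key
      rwa [neg_neg] at this
    -- the topology whose closed sets are the ru-closed sets
    have t1 : RuClosed P (Set.univ : Set X)ᶜ := by
      intro x l hx _
      simpa using hx 0
    have t2 : ∀ U V : Set X, RuClosed P Uᶜ → RuClosed P Vᶜ → RuClosed P (U ∩ V)ᶜ := by
      intro U V hU hV
      rw [Set.compl_inter]
      exact ruClosed_union P hU hV
    have t3 : ∀ s : Set (Set X), (∀ U ∈ s, RuClosed P Uᶜ) → RuClosed P (⋃₀ s)ᶜ := by
      intro s hs x l hx hconv hl
      obtain ⟨U, hUs, hlU⟩ := hl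
      have hmem : ∀ n, x n ∈ Uᶜ := by
        intro n hn
        exact hx n ⟨U, hUs, hn⟩
      exact hs U hUs x l hmem hconv hlU
    letI τ : TopologicalSpace X := ⟨fun U => RuClosed P Uᶜ, t1, t2, t3⟩
    refine ⟨τ, ?_, ?_⟩
    · -- ru-convergence implies convergence in this topology
      intro x l hconv
      rw [tendsto_atTop_nhds]
      intro U hlU hU
      by_contra h
      push_neg at h
      have h' : ∀ N : ℕ, ∃ k, N ≤ k ∧ x k ∈ Uᶜ := by
        intro N
        obtain ⟨k, hk1, hk2⟩ := h N
        exact ⟨k, hk1, hk2⟩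
      choose g hg1 hg2 using h'
      exact hU (fun k => x (g k)) l hg2 (ruConv_comp P g hg1 hconv) hlU
    · refine ⟨?_⟩
      show RuClosed P Pᶜᶜ
      rwa [compl_compl]
  · rintro ⟨τ, hconv, hclosed⟩ x u hu hux
    letI := τ
    have hcP : ∀ n : ℕ, (1 / ((n : ℝ) + 1)) • u - x ∈ P := by
      intro n
      have h1 : (1 / ((n : ℝ) + 1)) • (u - (n + 1) • x) ∈ P :=
        hP.2 _ (le_of_lt (by positivity)) _ (hux (n + 1))
      have h2 : (1 / ((n : ℝ) + 1)) • (u - (n + 1) • x) = (1 / ((n : ℝ) + 1)) • u - x := by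
        rw [smul_sub, ← Nat.cast_smul_eq_nsmul ℝ (n + 1) x, smul_smul]
        have hne : ((n : ℝ) + 1) ≠ 0 := by positivity
        push_cast
        rw [one_div_mul_cancel hne, one_smul]
      rwa [h2] at h1
    have hcconv : RuConv P (fun n => (1 / ((n : ℝ) + 1)) • u - x) (-x) := by
      refine ⟨u, hu, fun m hm => ⟨m, fun k hk => ?_⟩⟩
      have hd : ((1 / ((k : ℝ) + 1)) • u - x) - (-x) = (1 / ((k : ℝ) + 1)) • u := by
        rw [sub_neg_eq_add, sub_add_cancel]
      have hm0 : (0 : ℝ) < m := by exact_mod_cast hm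
      have hle : 1 / ((k : ℝ) + 1) ≤ 1 / (m : ℝ) := by
        apply one_div_le_one_div_of_le hm0
        have : (m : ℝ) ≤ (k : ℝ) := by exact_mod_cast hk
        linarith
      have hk0 : (0 : ℝ) < 1 / ((k : ℝ) + 1) := by positivity
      constructor
      · rw [hd, ← sub_smul]
        exact hP.2 _ (by linarith) _ hu
      · rw [hd, ← add_smul]
        exact hP.2 _ (by positivity) _ hu
    have htend := hconv _ _ hcconv
    exact hclosed.mem_of_tendsto htend (Filter.Eventually.of_forall hcP)
end

section
/- (Luxemburg–Moore–Veksler) Let A be a lattice ideal in a vector lattice X. Then the quotient X/A, pre-ordered by the image wedge [X₊] of the positive cone X₊ under the quotient map X → X/A, is Archimedean if and only if A is ru-closed in X. -/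
/-! For a solid subspace `A`, `[u] ≤ 0` holds in `X/A` exactly when `u⁺ ∈ A`.

If `X/A` is Archimedean and `xₖ ∈ A` ru-converge to `l` with regulator `w`, then
`±n[l] ≤ [w]` for every `n`, so `±[l] ≤ 0`, and `l = l⁺ - l⁻ ∈ A`.

Conversely, if `n[x] ≤ [w]` for every `n`, then `(n x - w)⁺ ∈ A`, so
`(x - w/(n+1))⁺ = (1/(n+1)) ((n+1) x - w)⁺ ∈ A`. By Birkhoff's inequality
`|a ⊔ c - b ⊔ c| ≤ |a - b|` these ru-converge to `x⁺` with regulator `w`, so `x⁺ ∈ A`,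
i.e. `[x] ≤ 0`. -/

section LatticeOrderedGroup

open LatticeOrderedAddCommGroup

variable {X : Type*} [Lattice X] [AddCommGroup X] [AddLeftMono X]

theorem abs_le_iff_sub_nonneg_and_add_nonneg {d c : X} : |d| ≤ c ↔ 0 ≤ c - d ∧ 0 ≤ c + d := by
  rw [abs_le', sub_nonneg, neg_le_iff_add_nonneg]

variable {R : Type*} [Ring R] [Module R X] {A : Submodule R X}

theorem posPart_mem_iff_neg_mkQ_mem_image_nonneg (hA : IsSolid (A : Set X)) (u : X) : u⁺ ∈ A ↔ -A.mkQ u ∈ A.mkQ '' {x : X | 0 ≤ x} := by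
  constructor
  · intro hu
    refine ⟨u⁻, negPart_nonneg u, ?_⟩
    rw [← Submodule.Quotient.mk_eq_zero A] at hu
    have : A.mkQ u = A.mkQ u⁺ - A.mkQ u⁻ := by rw [← map_sub, posPart_sub_negPart]
    simp [this, hu]
  · rintro ⟨y, hy, hyu⟩
    have hya : u + y ∈ A := by
      rw [← Submodule.Quotient.mk_eq_zero A]
      simpa [hyu] using (map_add A.mkQ u y)
    refine hA hya ?_
    rw [abs_of_nonneg (posPart_nonneg u)]
    exact sup_le ((le_add_of_nonneg_right hy).trans (le_abs_self _)) (abs_nonneg _)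

theorem mem_of_mkQ_mem_image_nonneg_of_neg (hA : IsSolid (A : Set X)) {l : X}
    (hl : A.mkQ l ∈ A.mkQ '' {x : X | 0 ≤ x}) (hl' : -A.mkQ l ∈ A.mkQ '' {x : X | 0 ≤ x}) :
    l ∈ A := by
  have hpos : l⁺ ∈ A := (posPart_mem_iff_neg_mkQ_mem_image_nonneg hA l).2 hl'
  have hneg : l⁻ ∈ A := by
    rw [← posPart_neg, posPart_mem_iff_neg_mkQ_mem_image_nonneg hA, map_neg, neg_neg]
    exact hl
  simpa only [posPart_sub_negPart] using A.sub_mem hpos hneg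

end LatticeOrderedGroup

/-- The Archimedean property of the preorder `a ≤ b ↔ b - a ∈ W`. -/
def IsArchimedeanWedge {V : Type*} [AddCommGroup V] (W : Set V) : Prop :=
  ∀ ξ η : V, η ∈ W → (∀ n : ℕ, η - n • ξ ∈ W) → -ξ ∈ W

section VectorLattice

variable {V : Type*} [Lattice V] [AddCommGroup V] [Module ℝ V]

theorem abs_smul_le_smul_of_abs_le [PosSMulMono ℝ V] {t : ℝ} (ht : 0 ≤ t) {d c : V}
    (h : |d| ≤ c) : |t • d| ≤ t • c := by
  rw [abs_le'] at h ⊢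
  rw [← smul_neg]
  exact ⟨smul_le_smul_of_nonneg_left h.1 ht, smul_le_smul_of_nonneg_left h.2 ht⟩

theorem posPart_smul_of_pos [PosSMulMono ℝ V] {t : ℝ} (ht : 0 < t) (u : V) :
    (t • u)⁺ = t • u⁺ := by
  have := (OrderIso.smulRight ht).map_sup u 0
  simp only [OrderIso.smulRight_apply, smul_zero] at this
  rw [posPart_def, posPart_def, this]

variable [AddLeftMono V]

theorem ruConv_nonneg_iff {x : ℕ → V} {l : V} :
    RuConv {v : V | 0 ≤ v} x l ↔
      ∃ w : V, 0 ≤ w ∧ ∀ m : ℕ, 1 ≤ m → ∃ N, ∀ k ≥ N, |x k - l| ≤ (1 / (m : ℝ)) • w := by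
  simp only [RuConv, Set.mem_ofPred_eq, abs_le_iff_sub_nonneg_and_add_nonneg]

variable [PosSMulMono ℝ V]

theorem RuConv.exists_abs_nsmul_sub_le {x : ℕ → V} {l : V} (h : RuConv {v : V | 0 ≤ v} x l) :
    ∃ w : V, 0 ≤ w ∧ ∀ n : ℕ, ∃ k, |n • (x k - l)| ≤ w := by
  obtain ⟨w, hw, hconv⟩ := ruConv_nonneg_iff.1 h
  refine ⟨w, hw, fun n => ?_⟩
  rcases Nat.eq_zero_or_pos n with rfl | hn
  · exact ⟨0, by simpa using hw⟩
  obtain ⟨k, hk⟩ := hconv n hn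
  have hn' : (0 : ℝ) < n := by exact_mod_cast hn
  refine ⟨k, ?_⟩
  simpa [← Nat.cast_smul_eq_nsmul ℝ, smul_smul, hn'.ne'] using
    abs_smul_le_smul_of_abs_le hn'.le (hk k le_rfl)

theorem ruConv_of_abs_sub_le_one_div_succ_smul {x : ℕ → V} {l w : V} (hw : 0 ≤ w)
    (h : ∀ n : ℕ, |x n - l| ≤ (1 / ((n : ℝ) + 1)) • w) : RuConv {v : V | 0 ≤ v} x l := by
  refine ruConv_nonneg_iff.2 ⟨w, hw, fun m hm => ⟨m, fun k hk => (h k).trans ?_⟩⟩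
  have hm' : (0 : ℝ) < m := by exact_mod_cast hm
  have hk' : (m : ℝ) ≤ k := by exact_mod_cast hk
  have hle : 1 / ((k : ℝ) + 1) ≤ 1 / m := one_div_le_one_div_of_le hm' (by linarith)
  simpa only [sub_smul, sub_nonneg] using smul_nonneg (sub_nonneg.2 hle) hw

theorem posPart_mem_of_ruClosed {A : Submodule ℝ V} (hA : RuClosed {v : V | 0 ≤ v} (A : Set V))
    {x w : V} (hw : 0 ≤ w) (h : ∀ n : ℕ, (n • x - w)⁺ ∈ A) : x⁺ ∈ A := by
  set d : ℕ → V := fun n => (x - (1 / ((n : ℝ) + 1)) • w)⁺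
  have hpos (n : ℕ) : (0 : ℝ) < n + 1 := by positivity
  have hd (n : ℕ) : d n = (1 / ((n : ℝ) + 1)) • ((n + 1) • x - w)⁺ := by
    rw [← posPart_smul_of_pos (by positivity), smul_sub, ← Nat.cast_smul_eq_nsmul ℝ, smul_smul]
    simp [d, (hpos n).ne']
  refine hA d x⁺ (fun n => hd n ▸ A.smul_mem _ (h (n + 1))) ?_
  refine ruConv_of_abs_sub_le_one_div_succ_smul hw fun n => ?_
  calc |d n - x⁺| ≤ |x - (1 / ((n : ℝ) + 1)) • w - x| := abs_sup_sub_sup_le_abs _ _ _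
    _ = (1 / ((n : ℝ) + 1)) • w := by
      rw [sub_sub_cancel_left, abs_neg, abs_of_nonneg (smul_nonneg (by positivity) hw)]

end VectorLattice

section Quotient

open LatticeOrderedAddCommGroup

variable {X : Type*} [Lattice X] [AddCommGroup X] [AddLeftMono X] [Module ℝ X]
  [PosSMulMono ℝ X] {A : Submodule ℝ X}

theorem ruClosed_of_isArchimedeanWedge (hA : IsSolid (A : Set X))
    (h : IsArchimedeanWedge (A.mkQ '' {x : X | 0 ≤ x})) :
    RuClosed {x : X | 0 ≤ x} (A : Set X) := by
  intro x l hxA hconv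
  obtain ⟨w, hw, hbound⟩ := hconv.exists_abs_nsmul_sub_le
  have hmkQ (n k : ℕ) : A.mkQ (n • (x k - l)) = -(n • A.mkQ l) := by
    have hx : A.mkQ (x k) = 0 := (Submodule.Quotient.mk_eq_zero A).2 (hxA k)
    rw [map_nsmul, map_sub, hx, zero_sub, smul_neg]
  have hlower : -A.mkQ l ∈ A.mkQ '' {x : X | 0 ≤ x} := h _ _ ⟨w, hw, rfl⟩ fun n => by
    obtain ⟨k, hk⟩ := hbound n
    exact ⟨w + n • (x k - l), (abs_le_iff_sub_nonneg_and_add_nonneg.1 hk).2,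
      by rw [map_add, hmkQ, sub_eq_add_neg]⟩
  have hupper : A.mkQ l ∈ A.mkQ '' {x : X | 0 ≤ x} := by
    simpa only [neg_neg] using h (-A.mkQ l) _ ⟨w, hw, rfl⟩ fun n => by
      obtain ⟨k, hk⟩ := hbound n
      exact ⟨w - n • (x k - l), (abs_le_iff_sub_nonneg_and_add_nonneg.1 hk).1,
        by rw [map_sub, hmkQ, smul_neg]⟩
  exact mem_of_mkQ_mem_image_nonneg_of_neg hA hupper hlower

theorem isArchimedeanWedge_of_ruClosed (hA : IsSolid (A : Set X))
    (h : RuClosed {x : X | 0 ≤ x} (A : Set X)) :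
    IsArchimedeanWedge (A.mkQ '' {x : X | 0 ≤ x}) := by
  rintro ξ _ ⟨w, hw, rfl⟩ hle
  obtain ⟨x, rfl⟩ := A.mkQ_surjective ξ
  rw [← posPart_mem_iff_neg_mkQ_mem_image_nonneg hA]
  refine posPart_mem_of_ruClosed h hw fun n => ?_
  rw [posPart_mem_iff_neg_mkQ_mem_image_nonneg hA]
  simpa using hle n

end Quotient

/-- **Luxemburg–Moore–Veksler.** Let `A` be a lattice ideal in a
vector lattice `X`.  The quotient `X/A`, pre-ordered by the image wedge `[X₊]`
of the positive cone, is Archimedean if and only if `A` is ru-closed in `X`. -/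
theorem quotient_archimedean_iff_ideal_ruClosed {X : Type*}
    [Lattice X] [AddCommGroup X] [CovariantClass X X (· + ·) (· ≤ ·)]
    [Module ℝ X] (hsmul : ∀ t : ℝ, 0 ≤ t → ∀ x : X, 0 ≤ x → 0 ≤ t • x)
    (A : Submodule ℝ X) (hA : ∀ a ∈ A, ∀ x : X, |x| ≤ |a| → x ∈ A) :
    (∀ ξ η : X ⧸ A, η ∈ A.mkQ '' {x : X | 0 ≤ x} →
        (∀ n : ℕ, η - n • ξ ∈ A.mkQ '' {x : X | 0 ≤ x}) →
        -ξ ∈ A.mkQ '' {x : X | 0 ≤ x}) ↔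
      RuClosed {x : X | 0 ≤ x} (A : Set X) := by
  have : PosSMulMono ℝ X := ⟨fun t ht a b hab => by
    simpa [smul_sub] using hsmul t ht (b - a) (sub_nonneg.2 hab)⟩
  have hA' : LatticeOrderedAddCommGroup.IsSolid (A : Set X) := fun a ha x hx => hA a ha x hx
  exact ⟨ruClosed_of_isArchimedeanWedge hA', isArchimedeanWedge_of_ruClosed hA'⟩
end

section
/- Let X be a pre-ordered vector space with positive wedge X₊, let W be the τ_ru-closure of X₊, A = W ∩ (−W), and let q : X → X/A be the quotient map. Then (X/A, [W]) is the Archimedeanization of X: for every real vector space Y equipped with an Archimedean cone Y₊ and every positive linear operator φ : X → Y (φ(X₊) ⊆ Y₊), there exists a unique linear operator T : X/A → Y with T ∘ q = φ, and this T is positive, i.e. T([W]) ⊆ Y₊. -/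
/-- Let `X` be a pre-ordered vector space with positive wedge
`P`, `W` the τ_ru-closure of `P`, `A = W ∩ (−W)`, and `q : X → X/A` the quotient
map.  Then `(X/A, [W])` is the Archimedeanization of `X`: for every real vector
space `Y` with an Archimedean cone `Q` and every positive linear `φ : X → Y`,
there is a unique linear `T : X/A → Y` with `T ∘ q = φ`, and `T` is positive. -/
theorem archimedeanization {X : Type*} [AddCommGroup X] [Module ℝ X]
    (P : Set X) (hP : IsWedge P)
    (A : Submodule ℝ X) (hA : (A : Set X) = ruClosure P P ∩ (-(ruClosure P P)))
    {Y : Type*} [AddCommGroup Y] [Module ℝ Y] (Q : Set Y)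
    (hQwedge : IsWedge Q) (hQcone : Q ∩ (-Q) = {0})
    (hQarch : ∀ y u : Y, u ∈ Q → (∀ n : ℕ, u - n • y ∈ Q) → -y ∈ Q)
    (φ : X →ₗ[ℝ] Y) (hφ : ∀ x ∈ P, φ x ∈ Q) :
    ∃ T : X ⧸ A →ₗ[ℝ] Y, T.comp A.mkQ = φ ∧
      (∀ ξ ∈ A.mkQ '' ruClosure P P, T ξ ∈ Q) ∧
      ∀ T' : X ⧸ A →ₗ[ℝ] Y, T'.comp A.mkQ = φ → T' = T := by
  classical
  -- Step 1: φ ⁻¹' Q is ru-closed (uses Archimedean property of Q).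
  have hclosed : RuClosed P (φ ⁻¹' Q) := by
    intro x l hx hconv
    obtain ⟨w, hw, hN⟩ := hconv
    have key : ∀ n : ℕ, φ w - n • (-(φ l)) ∈ Q := by
      intro n
      rcases Nat.eq_zero_or_pos n with rfl | hn
      · simpa using hφ w hw
      · obtain ⟨N, hk⟩ := hN n hn
        have h1 := (hk N le_rfl).1
        have h2 : φ ((1 / (n : ℝ)) • w - (x N - l)) ∈ Q := hφ _ h1
        have h3 : φ ((1 / (n : ℝ)) • w - (x N - l)) + φ (x N) ∈ Q :=
          hQwedge.1 _ h2 _ (hx N)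
        have h4 : (1 / (n : ℝ)) • φ w + φ l ∈ Q := by
          have : φ ((1 / (n : ℝ)) • w - (x N - l)) + φ (x N)
              = (1 / (n : ℝ)) • φ w + φ l := by
            simp [map_sub, map_smul]
            abel
          rwa [this] at h3
        have h5 : (n : ℝ) • ((1 / (n : ℝ)) • φ w + φ l) ∈ Q :=
          hQwedge.2 _ (by positivity) _ h4
        have hne : (n : ℝ) ≠ 0 := Nat.cast_ne_zero.mpr hn.ne'
        have : (n : ℝ) • ((1 / (n : ℝ)) • φ w + φ l) = φ w - n • (-(φ l)) := by
          rw [smul_add, smul_smul, mul_one_div, div_self hne, one_smul]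
          simp [sub_eq_add_neg, Nat.cast_smul_eq_nsmul]
        rwa [this] at h5
    have := hQarch (-(φ l)) (φ w) (hφ w hw) key
    simpa using this
  -- Step 2: W := ruClosure P P ⊆ φ ⁻¹' Q.
  have hW : ruClosure P P ⊆ φ ⁻¹' Q := by
    intro x hx
    exact hx (φ ⁻¹' Q) ⟨fun y hy => hφ y hy, hclosed⟩
  -- Step 3: A ≤ ker φ.
  have hker : A ≤ LinearMap.ker φ := by
    intro a ha
    rw [← SetLike.mem_coe, hA] at ha
    have h1 : φ a ∈ Q := hW ha.1
    have h2 : φ (-a) ∈ Q := hW ha.2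
    have : φ a ∈ Q ∩ (-Q) := ⟨h1, by simpa using h2⟩
    rw [hQcone] at this
    simpa using this
  refine ⟨A.liftQ φ hker, A.liftQ_mkQ φ hker, ?_, ?_⟩
  · rintro ξ ⟨x, hx, rfl⟩
    simpa using hW hx
  · intro T' hT'
    refine LinearMap.ext fun ξ => ?_
    obtain ⟨x, rfl⟩ := A.mkQ_surjective ξ
    have := congrArg (fun f : X →ₗ[ℝ] Y => f x) hT'
    simpa using this
end

section
/- Let X and Y be pre-ordered vector spaces with Y Archimedean, and let φ : X → Y be a positive linear operator (φ(X₊) ⊆ Y₊). Then φ maps the τ_ru-closure W of X₊ into Y₊, i.e. φ(W) ⊆ Y₊. -/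
/-- Let `X`, `Y` be pre-ordered vector spaces with `Y`
Archimedean, and let `φ : X → Y` be a positive linear operator.  Then `φ` maps
the τ_ru-closure `W` of `X₊` into `Y₊`. -/
theorem positive_operator_maps_closure_into_cone {X Y : Type*}
    [AddCommGroup X] [Module ℝ X] [AddCommGroup Y] [Module ℝ Y]
    (P : Set X) (hP : IsWedge P) (Q : Set Y) (hQ : IsWedge Q)
    (hQarch : ∀ y u : Y, u ∈ Q → (∀ n : ℕ, u - n • y ∈ Q) → -y ∈ Q)
    (φ : X →ₗ[ℝ] Y) (hφ : ∀ x ∈ P, φ x ∈ Q) :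
    ∀ x ∈ ruClosure P P, φ x ∈ Q := by
  intro x hx
  have key : RuClosed P (φ ⁻¹' Q) := by
    rintro z l hz ⟨w, hw, hconv⟩
    -- for all m ≥ 1, (1/m) • φ w + φ l ∈ Q
    have h1 : ∀ m : ℕ, 1 ≤ m → (1 / (m : ℝ)) • φ w + φ l ∈ Q := by
      intro m hm
      obtain ⟨N, hN⟩ := hconv m hm
      have h := (hN N le_rfl).1
      have h' : (1 / (m : ℝ)) • φ w - φ (z N) + φ l ∈ Q := by
        have := hφ _ h
        simpa [map_sub, map_smul, sub_eq_add_neg, add_comm, add_left_comm, add_assoc] using this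
      have := hQ.1 _ h' _ (hz N)
      convert this using 1
      abel
    have h2 : ∀ n : ℕ, φ w - n • (-(φ l)) ∈ Q := by
      intro n
      rcases Nat.eq_zero_or_pos n with h0 | hpos
      · simpa [h0] using hφ w hw
      · have := hQ.2 (n : ℝ) (by positivity) _ (h1 n hpos)
        have hne : (n : ℝ) ≠ 0 := by positivity
        rw [smul_add, smul_smul] at this
        field_simp at this
        convert this using 1
        simp [sub_eq_add_neg, smul_neg, Nat.cast_smul_eq_nsmul]
    have := hQarch (-(φ l)) (φ w) (hφ w hw) h2
    simpa using this
  exact hx _ ⟨hφ, key⟩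
end

section
/- Every element of the quotient c₀/c₀₀ is an infinitesimal of c₀/c₀₀. Concretely: for every real sequence x : ℕ → ℝ with x(k) → 0, there exists a real sequence y : ℕ → ℝ with y(k) ≥ 0 for all k and y(k) → 0, such that for every n ∈ ℕ with n ≥ 1 the inequality n·|x(k)| ≤ y(k) holds for all but finitely many k (so that ±[x] ≤ (1/n)[y] in c₀/c₀₀ for all n ≥ 1). -/
/-! Take `y = √|x|`: it still tends to `0`, and `n * |x k| ≤ √|x k|` as soon as
`n² * |x k| ≤ 1`, which holds eventually because `x` tends to `0`. -/

open Filter Topology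

lemma mul_le_sqrt_of_sq_mul_le_one {c t : ℝ} (ht : 0 ≤ t) (h : c ^ 2 * t ≤ 1) :
    c * t ≤ √t := by
  have hsqrt : |c| * √t ≤ 1 := by
    rw [← Real.sqrt_sq_eq_abs, ← Real.sqrt_mul (sq_nonneg c)]
    exact Real.sqrt_le_one.mpr h
  calc c * t ≤ |c| * t := mul_le_mul_of_nonneg_right (le_abs_self c) ht
    _ = |c| * √t * √t := by rw [mul_assoc, Real.mul_self_sqrt ht]
    _ ≤ √t := mul_le_of_le_one_left (Real.sqrt_nonneg t) hsqrt

section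

variable {ι : Type*} {l : Filter ι} {x : ι → ℝ}

lemma Filter.Tendsto.sqrt_abs_zero (hx : Tendsto x l (𝓝 0)) :
    Tendsto (fun k ↦ √|x k|) l (𝓝 0) := by
  simpa using hx.abs.sqrt

lemma Filter.Tendsto.eventually_mul_abs_le_sqrt_abs (hx : Tendsto x l (𝓝 0)) (c : ℝ) :
    ∀ᶠ k in l, c * |x k| ≤ √|x k| := by
  have hlim : Tendsto (fun k ↦ c ^ 2 * |x k|) l (𝓝 0) := by
    simpa using hx.abs.const_mul (c ^ 2)
  have hsmall : ∀ᶠ k in l, c ^ 2 * |x k| < 1 := hlim.eventually_lt_const one_pos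
  filter_upwards [hsmall] with k hk
  exact mul_le_sqrt_of_sq_mul_le_one (abs_nonneg _) hk.le

end

/-- Every element of `c₀/c₀₀` is an infinitesimal of `c₀/c₀₀`:
for every real sequence `x` tending to `0` there is a nonnegative real sequence
`y` tending to `0` such that for every `n ≥ 1`, `n·|x k| ≤ y k` for all but
finitely many `k` (so `±[x] ≤ (1/n)·[y]` in `c₀/c₀₀` for every `n ≥ 1`). -/
theorem c0_quotient_infinitesimal (x : ℕ → ℝ)
    (hx : Filter.Tendsto x Filter.atTop (nhds 0)) :
    ∃ y : ℕ → ℝ, (∀ k, 0 ≤ y k) ∧ Filter.Tendsto y Filter.atTop (nhds 0) ∧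
      ∀ n : ℕ, 1 ≤ n → ∀ᶠ k in Filter.atTop, (n : ℝ) * |x k| ≤ y k :=
  ⟨fun k ↦ √|x k|, fun _ ↦ Real.sqrt_nonneg _, hx.sqrt_abs_zero,
    fun n _ ↦ hx.eventually_mul_abs_le_sqrt_abs n⟩
end
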